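/- arXiv:1401.1296 — 3 statements merged into one kernel-verified Lean document; each statement's English description precedes it below -/
import Mathlib

section
/- For parameters ν > 0, a > 0, 0 < p < 1 + ν, there exists a constant C > 0 (depending on a, ν, p but not on t) such that for all t ≥ 1, (2t)^{-p} e^{-a²/(2t)} Σ_{n=0}^∞ a^{2n} Γ(n+ν+1-p) / (Γ(n+1) Γ(n+ν+1) (2t)^n) ≤ (Γ(1+ν-p)/Γ(1+ν)) (2t)^{-p} + C t^{-1-p}. -/
/-!
For `n ≥ 1` the ratio `Γ(n+ν+1-p) / Γ(n+ν+1)` is at most `1`, so with `x = a² / (2t)` the terms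
`n ≥ 1` of the series are dominated by the tail `eˣ - 1` of the exponential series. The damping
factor then gives `e⁻ˣ (K + eˣ - 1) ≤ K + (1 - e⁻ˣ) ≤ K + x`, where `K` is the `n = 0` term, and
`(2t)^(-p) x = a² 2^(-1-p) t^(-1-p)`.
-/

open Real
open scoped Nat

lemma Real.Gamma_le_Gamma_of_le {x y : ℝ} (hx : 1 ≤ x) (hy : 2 ≤ y) (hxy : x ≤ y) :
    Gamma x ≤ Gamma y := by
  have hseg : x ∈ segment ℝ 1 y := by
    rw [segment_eq_Icc (by linarith)]
    exact ⟨hx, hxy⟩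
  have hy1 : Gamma 1 ≤ Gamma y := by
    rw [Gamma_one, ← Gamma_two]
    exact Gamma_strictMonoOn_Ici.monotoneOn (Set.mem_Ici.mpr le_rfl) hy hy
  calc Gamma x ≤ max (Gamma 1) (Gamma y) :=
        convexOn_Gamma.le_on_segment (by norm_num) (Set.mem_Ioi.mpr (by linarith)) hseg
    _ = Gamma y := max_eq_right hy1

section BesselSeries

variable {ν p a s : ℝ}

lemma bessel_summand_nonneg (hp0 : 0 ≤ p) (hp1 : p < 1 + ν) (hs : 0 ≤ s) (n : ℕ) :
    0 ≤ a ^ (2 * n) * Gamma (n + ν + 1 - p) / (Gamma (n + 1) * Gamma (n + ν + 1) * s ^ n) := by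
  have hn : (0 : ℝ) ≤ n := n.cast_nonneg
  have := Gamma_pos_of_pos (show 0 < (n : ℝ) + ν + 1 - p by linarith)
  have := Gamma_pos_of_pos (show 0 < (n : ℝ) + 1 by linarith)
  have := Gamma_pos_of_pos (show 0 < (n : ℝ) + ν + 1 by linarith)
  rw [pow_mul]
  positivity

lemma bessel_summand_le_pow_div_factorial (hν : 0 < ν) (hp0 : 0 < p) (hp1 : p < 1 + ν)
    (hs : 0 < s) {n : ℕ} (hn : n ≠ 0) :
    a ^ (2 * n) * Gamma (n + ν + 1 - p) / (Gamma (n + 1) * Gamma (n + ν + 1) * s ^ n) ≤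
      (a ^ 2 / s) ^ n / n ! := by
  have hn1 : (1 : ℝ) ≤ n := Nat.one_le_cast.mpr (Nat.pos_of_ne_zero hn)
  have hGamma : Gamma (n + ν + 1 - p) ≤ Gamma (n + ν + 1) :=
    Gamma_le_Gamma_of_le (by linarith) (by linarith) (by linarith)
  have hpos := Gamma_pos_of_pos (show 0 < (n : ℝ) + ν + 1 by linarith)
  have hpow : 0 ≤ a ^ (2 * n) := by rw [pow_mul]; positivity
  calc a ^ (2 * n) * Gamma (n + ν + 1 - p) / (Gamma (n + 1) * Gamma (n + ν + 1) * s ^ n)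
      ≤ a ^ (2 * n) * Gamma (n + ν + 1) / (Gamma (n + 1) * Gamma (n + ν + 1) * s ^ n) := by
        gcongr
    _ = (a ^ 2 / s) ^ n / n ! := by
        rw [Gamma_nat_eq_factorial, div_pow, pow_mul]
        field_simp

lemma tsum_bessel_summand_le (hν : 0 < ν) (hp0 : 0 < p) (hp1 : p < 1 + ν) (hs : 0 < s) :
    ∑' n : ℕ, a ^ (2 * n) * Gamma (n + ν + 1 - p) / (Gamma (n + 1) * Gamma (n + ν + 1) * s ^ n) ≤
      Gamma (1 + ν - p) / Gamma (1 + ν) + (exp (a ^ 2 / s) - 1) := by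
  set f : ℕ → ℝ := fun n ↦
    a ^ (2 * n) * Gamma (n + ν + 1 - p) / (Gamma (n + 1) * Gamma (n + ν + 1) * s ^ n)
  set g : ℕ → ℝ := fun n ↦ (a ^ 2 / s) ^ n / (n ! : ℝ)
  have hg : HasSum g (exp (a ^ 2 / s)) := exp_eq_exp_ℝ ▸ NormedSpace.expSeries_div_hasSum_exp _
  have hg_tail : HasSum (fun n ↦ g (n + 1)) (exp (a ^ 2 / s) - 1) := by
    simpa [g] using (hasSum_nat_add_iff' 1).mpr hg
  have hfg (n : ℕ) : f (n + 1) ≤ g (n + 1) :=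
    bessel_summand_le_pow_div_factorial hν hp0 hp1 hs n.succ_ne_zero
  have hf_tail : Summable (fun n ↦ f (n + 1)) :=
    hg_tail.summable.of_nonneg_of_le (fun n ↦ bessel_summand_nonneg hp0.le hp1 hs.le _) hfg
  have hf0 : f 0 = Gamma (1 + ν - p) / Gamma (1 + ν) := by
    simp only [f]
    norm_num [add_comm]
  rw [((summable_nat_add_iff 1).mp hf_tail).tsum_eq_zero_add, hf0]
  gcongr
  exact hasSum_le hfg hf_tail.hasSum hg_tail

end BesselSeries

/-- Upper bound for the series expression for the negative moment of a Bessel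
process: it equals the leading term up to an error `C * t^(-1-p)`, uniformly for
`t ≥ 1`. -/
theorem series_upper_bound (ν a p : ℝ) (hν : 0 < ν) (ha : 0 < a)
    (hp0 : 0 < p) (hp1 : p < 1 + ν) :
    ∃ C > 0, ∀ t ≥ (1 : ℝ),
      (2 * t) ^ (-p) * Real.exp (-a ^ 2 / (2 * t)) *
        ∑' n : ℕ, a ^ (2 * n) * Real.Gamma (n + ν + 1 - p) /
          (Real.Gamma (n + 1) * Real.Gamma (n + ν + 1) * (2 * t) ^ n) ≤
      Real.Gamma (1 + ν - p) / Real.Gamma (1 + ν) * (2 * t) ^ (-p) +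
        C * t ^ (-1 - p) := by
  refine ⟨a ^ 2 * 2 ^ (-1 - p), by positivity, fun t ht ↦ ?_⟩
  have hs : 0 < 2 * t := by linarith
  set K := Gamma (1 + ν - p) / Gamma (1 + ν)
  set x := a ^ 2 / (2 * t)
  have hK : 0 ≤ K := div_nonneg (Gamma_pos_of_pos (by linarith)).le
    (Gamma_pos_of_pos (by linarith)).le
  have hdamp : exp (-x) * (K + (exp x - 1)) ≤ K + x := by
    have hx : 0 ≤ x := by positivity
    calc exp (-x) * (K + (exp x - 1)) = K * exp (-x) + (1 - exp (-x)) := by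
          rw [mul_add, mul_sub, ← exp_add, neg_add_cancel, exp_zero]
          ring
      _ ≤ K * 1 + x := by
          gcongr
          · exact exp_le_one_iff.mpr (neg_nonpos.mpr hx)
          · linarith [add_one_le_exp (-x)]
      _ = K + x := by rw [mul_one]
  have hscale : (2 * t) ^ (-p) * x = a ^ 2 * 2 ^ (-1 - p) * t ^ (-1 - p) := by
    rw [mul_assoc, ← mul_rpow zero_le_two (by linarith), show -1 - p = -p - 1 by ring,
      rpow_sub_one hs.ne']
    ring
  calc (2 * t) ^ (-p) * exp (-a ^ 2 / (2 * t)) * _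
      ≤ (2 * t) ^ (-p) * (exp (-x) * (K + (exp x - 1))) := by
        rw [mul_assoc, neg_div]
        gcongr
        exact tsum_bessel_summand_le hν hp0 hp1 hs
    _ ≤ (2 * t) ^ (-p) * (K + x) := by gcongr
    _ = K * (2 * t) ^ (-p) + a ^ 2 * 2 ^ (-1 - p) * t ^ (-1 - p) := by rw [← hscale]; ring
end

section
/- Let ν > 0, a > 0, and 0 < p < 1 + ν. Then for every y > 0 and t > 0, ∫_0^∞ y^{-2p} (1/t) (y/a)^ν y e^{-(a²+y²)/(2t)} I_ν(a y / t) dy = (2t)^{-p} e^{-a²/(2t)} Σ_{n=0}^∞ a^{2n} Γ(n+ν+1-p) / (Γ(n+1) Γ(n+ν+1) (2t)^n), where I_ν(z) = (z/2)^ν Σ_{n=0}^∞ (z/2)^{2n} / (Γ(n+1) Γ(1+ν+n)) is the modified Bessel function of the first kind. -/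
/-! Expanding `I_ν` in its power series turns the integrand into a series of nonnegative
functions, the `n`-th a constant multiple of the Gaussian moment `y^(2(n+ν-p)+1) e^(-y²/(2t))`,
whose integral over `(0, ∞)` is `Γ(n+ν+1-p) (2t)^(n+ν+1-p) / 2`. By nonnegativity the sum and
the integral may be exchanged once the series of integrals converges, and it does: since
`Γ` increases on `[2, ∞)`, its terms are dominated by those of the exponential series. -/

open Real MeasureTheory

/-- The modified Bessel function of the first kind, defined by its power
series, for positive real arguments. -/
noncomputable def besselI (ν z : ℝ) : ℝ :=
  (z / 2) ^ ν * ∑' n : ℕ, (z / 2) ^ (2 * n) / (Real.Gamma (n + 1) * Real.Gamma (1 + ν + n))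

open Set Filter

theorem integral_rpow_two_mul_add_one_mul_exp_neg_mul_sq {q b : ℝ} (hq : -1 < q)
    (hb : 0 < b) :
    ∫ y in Ioi (0 : ℝ), y ^ (2 * q + 1) * exp (-b * y ^ 2) =
      Gamma (q + 1) / (2 * b ^ (q + 1)) := by
  simp_rw [← rpow_two]
  rw [integral_rpow_mul_exp_neg_mul_rpow two_pos (by linarith) hb,
    show -(2 * q + 1 + 1) / 2 = -(q + 1) by ring, show (2 * q + 1 + 1) / 2 = q + 1 by ring,
    rpow_neg hb.le]
  field_simp

theorem integral_tsum_of_nonneg {α ι : Type*} [MeasurableSpace α] [Countable ι] {μ : Measure α}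
    {F : ι → α → ℝ} (hF_int : ∀ i, Integrable (F i) μ) (hF_nonneg : ∀ i, 0 ≤ᵐ[μ] F i)
    (hF_sum : Summable fun i ↦ ∫ a, F i a ∂μ) :
    ∫ a, ∑' i, F i a ∂μ = ∑' i, ∫ a, F i a ∂μ := by
  refine (integral_tsum_of_summable_integral_norm hF_int (hF_sum.congr fun i ↦ ?_)).symm
  exact integral_congr_ae <| (hF_nonneg i).mono fun a ha ↦ (norm_of_nonneg ha).symm

theorem summable_pow_mul_Gamma_sub_div {ν p : ℝ} (hp0 : 0 ≤ p) (hp1 : p ≤ 1 + ν) (x : ℝ) :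
    Summable fun n : ℕ ↦
      x ^ n * Gamma (n + ν + 1 - p) / (Gamma (n + 1) * Gamma (n + ν + 1)) := by
  refine .of_norm_bounded_eventually_nat (summable_pow_div_factorial |x|) ?_
  filter_upwards [eventually_ge_atTop 2] with n hn
  have hn' : (2 : ℝ) ≤ n := by exact_mod_cast hn
  have hlow : 0 < Gamma (n + ν + 1 - p) := Gamma_pos_of_pos (by linarith)
  have hhigh : 0 < Gamma (n + ν + 1) := Gamma_pos_of_pos (by linarith)
  have hmono : Gamma (n + ν + 1 - p) ≤ Gamma (n + ν + 1) :=
    Gamma_strictMonoOn_Ici.monotoneOn (by simp; linarith) (by simp; linarith) (by linarith)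
  rw [Gamma_nat_eq_factorial, norm_div, norm_mul, norm_mul, norm_pow, norm_of_nonneg hlow.le,
    norm_of_nonneg hhigh.le, Real.norm_natCast, Real.norm_eq_abs, mul_div_mul_comm]
  exact mul_le_of_le_one_right (by positivity) ((div_le_one hhigh).mpr hmono)

noncomputable def besselMomentTerm (ν a p t : ℝ) (n : ℕ) (y : ℝ) : ℝ :=
  exp (-a ^ 2 / (2 * t)) / t * (2 * t) ^ (-ν) *
      ((a / (2 * t)) ^ (2 * n) / (Gamma (n + 1) * Gamma (1 + ν + n))) *
    (y ^ (2 * (n + ν - p) + 1) * exp (-(2 * t)⁻¹ * y ^ 2))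

section besselMomentTerm

variable {ν a p t y : ℝ}

theorem besselMomentTerm_nonneg (hν : -1 < ν) (ht : 0 ≤ t) (hy : 0 ≤ y) (n : ℕ) :
    0 ≤ besselMomentTerm ν a p t n y := by
  have : 0 < Gamma (n + 1) := Gamma_pos_of_pos (by positivity)
  have : 0 < Gamma (1 + ν + n) := Gamma_pos_of_pos (by linarith [n.cast_nonneg (α := ℝ)])
  have : 0 ≤ (a / (2 * t)) ^ (2 * n) := by rw [pow_mul]; positivity
  have : 0 ≤ y ^ (2 * (n + ν - p) + 1) := rpow_nonneg hy _
  unfold besselMomentTerm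
  positivity

theorem integrableOn_besselMomentTerm (hp : p < 1 + ν) (ht : 0 < t) (n : ℕ) :
    IntegrableOn (besselMomentTerm ν a p t n) (Ioi 0) :=
  (integrableOn_rpow_mul_exp_neg_mul_sq (by positivity)
    (by linarith [n.cast_nonneg (α := ℝ)])).const_mul _

theorem integral_besselMomentTerm (hp : p < 1 + ν) (ht : 0 < t) (n : ℕ) :
    ∫ y in Ioi 0, besselMomentTerm ν a p t n y =
      (2 * t) ^ (-p) * exp (-a ^ 2 / (2 * t)) *
        (a ^ (2 * n) * Gamma (n + ν + 1 - p) /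
          (Gamma (n + 1) * Gamma (n + ν + 1) * (2 * t) ^ n)) := by
  have h2t : 0 < 2 * t := by positivity
  have hexp : (2 * t) ^ (-ν) * (2 * t) ^ (n + ν + 1 - p) =
      (2 * t) ^ n * (2 * t) * (2 * t) ^ (-p) := by
    rw [← rpow_add h2t, show -ν + (n + ν + 1 - p) = n + (1 + -p) by ring, rpow_add h2t,
      rpow_add h2t, rpow_natCast, rpow_one]
    ring
  unfold besselMomentTerm
  rw [integral_const_mul, integral_rpow_two_mul_add_one_mul_exp_neg_mul_sq
    (by linarith [n.cast_nonneg (α := ℝ)]) (inv_pos.mpr h2t), inv_rpow h2t.le,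
    show (1 : ℝ) + ν + n = n + ν + 1 by ring, show (n : ℝ) + ν - p + 1 = n + ν + 1 - p by ring,
    div_pow, pow_mul' (2 * t)]
  field_simp
  linear_combination (a ^ (2 * n) * Gamma (n + ν + 1 - p) / Gamma (n + ν + 1)) * hexp

theorem moment_integrand_eq_tsum_besselMomentTerm (ha : 0 < a) (ht : 0 < t) (hy : 0 < y) :
    y ^ (-(2 * p)) * (1 / t) * (y / a) ^ ν * y * exp (-(a ^ 2 + y ^ 2) / (2 * t)) *
        besselI ν (a * y / t) =
      ∑' n : ℕ, besselMomentTerm ν a p t n y := by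
  have h2t : 0 < 2 * t := by positivity
  have hz : a * y / t / 2 = a / (2 * t) * y := by ring
  have hexp : exp (-(a ^ 2 + y ^ 2) / (2 * t)) =
      exp (-a ^ 2 / (2 * t)) * exp (-(2 * t)⁻¹ * y ^ 2) := by
    rw [← exp_add]
    ring_nf
  have hbessel : (y / a) ^ ν * (a / (2 * t) * y) ^ ν = (2 * t) ^ (-ν) * y ^ (2 * ν) := by
    rw [← mul_rpow (by positivity) (by positivity),
      show y / a * (a / (2 * t) * y) = (2 * t)⁻¹ * y ^ 2 by field_simp,
      mul_rpow (by positivity) (by positivity), inv_rpow h2t.le, ← rpow_neg h2t.le,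
      ← rpow_natCast, ← rpow_mul hy.le]
    norm_num
  unfold besselI besselMomentTerm
  rw [hz, ← tsum_mul_left (α := ℝ), ← tsum_mul_left (α := ℝ)]
  refine tsum_congr fun n ↦ ?_
  have hpow : y ^ (-(2 * p)) * y ^ (2 * ν) * y * y ^ (2 * n) = y ^ (2 * (n + ν - p) + 1) := by
    rw [← rpow_natCast, ← rpow_add hy, ← rpow_add_one hy.ne', ← rpow_add hy]
    push_cast
    ring_nf
  rw [hexp, mul_pow, ← hpow]
  linear_combination (y ^ (-(2 * p)) * (1 / t) * y * exp (-a ^ 2 / (2 * t)) *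
    exp (-(2 * t)⁻¹ * y ^ 2) * ((a / (2 * t)) ^ (2 * n) * y ^ (2 * n)) /
      (Gamma (n + 1) * Gamma (1 + ν + n))) * hbessel

end besselMomentTerm

theorem moment_integral_eq_series_general (ν a p t : ℝ) (ha : 0 < a)
    (hp0 : 0 < p) (hp1 : p < 1 + ν) (ht : 0 < t) :
    ∫ y in Set.Ioi (0 : ℝ),
        y ^ (-(2 * p)) * (1 / t) * (y / a) ^ ν * y *
          Real.exp (-(a ^ 2 + y ^ 2) / (2 * t)) * besselI ν (a * y / t) =
    (2 * t) ^ (-p) * Real.exp (-a ^ 2 / (2 * t)) *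
      ∑' n : ℕ, a ^ (2 * n) * Real.Gamma (n + ν + 1 - p) /
        (Real.Gamma (n + 1) * Real.Gamma (n + ν + 1) * (2 * t) ^ n) := by
  have hseries : Summable fun n : ℕ ↦ a ^ (2 * n) * Gamma (n + ν + 1 - p) /
      (Gamma (n + 1) * Gamma (n + ν + 1) * (2 * t) ^ n) :=
    (summable_pow_mul_Gamma_sub_div hp0.le hp1.le (a ^ 2 / (2 * t))).congr fun n ↦ by
      rw [div_pow, ← pow_mul]
      field_simp
  rw [setIntegral_congr_fun measurableSet_Ioi fun y hy ↦
      moment_integrand_eq_tsum_besselMomentTerm ha ht hy,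
    integral_tsum_of_nonneg (integrableOn_besselMomentTerm hp1 ht)
      (fun n ↦ ae_restrict_of_forall_mem measurableSet_Ioi fun y hy ↦
        besselMomentTerm_nonneg (by linarith) ht.le (le_of_lt hy) n)
      (by simpa only [integral_besselMomentTerm hp1 ht] using hseries.mul_left _),
    tsum_congr (integral_besselMomentTerm hp1 ht), tsum_mul_left]

/-- The `(-2p)`-th moment of the Bessel process transition density equals the
explicit series expression, by termwise integration. -/
theorem moment_integral_eq_series (ν a p t : ℝ) (hν : 0 < ν) (ha : 0 < a)
    (hp0 : 0 < p) (hp1 : p < 1 + ν) (ht : 0 < t) :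
    ∫ y in Set.Ioi (0 : ℝ),
        y ^ (-(2 * p)) * (1 / t) * (y / a) ^ ν * y *
          Real.exp (-(a ^ 2 + y ^ 2) / (2 * t)) * besselI ν (a * y / t) =
    (2 * t) ^ (-p) * Real.exp (-a ^ 2 / (2 * t)) *
      ∑' n : ℕ, a ^ (2 * n) * Real.Gamma (n + ν + 1 - p) /
        (Real.Gamma (n + 1) * Real.Gamma (n + ν + 1) * (2 * t) ^ n) :=
  moment_integral_eq_series_general ν a p t ha hp0 hp1 ht
end

section
/- Let ν > 0 and let μ be a finite measure on [0, ∞) with total mass m = μ([0,∞)) and tail bound μ((s,∞)) ≤ C s^{-ν} for s ≥ 1. Fix α ∈ (0, 1). Then for t large enough, the quantity J₂(t) = (2^ν Γ(ν+1))^{-1} ∫_{[0, t^α]} (t-s)^{-ν} dμ(s) satisfies | J₂(t) - m / (Γ(ν+1)(2t)^ν) | ≤ C'' t^{-ν} ( t^{-αν} + t^{-(1-α)} ) for a constant C'' independent of t. -/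
/-! On `[0, t^α]` the integrand `(t - s)^(-ν)` lies between `t^(-ν)` and
`(t - t^α)^(-ν) = t^(-ν) (1 - t^(α-1))^(-ν) ≤ t^(-ν) (1 + O(t^(α-1)))`, while the tail bound
shows that `[0, t^α]` carries all of the mass `m` up to `O(t^(-αν))`. Hence the integral is
`m t^(-ν)` up to an error `t^(-ν) (O(t^(α-1)) + O(t^(-αν)))`. -/

open Real MeasureTheory Filter Set

lemma one_sub_rpow_neg_le {ν p u : ℝ} (hνp : ν ≤ p) (hp : 1 ≤ p) (hu : 0 ≤ u)
    (hpu : 2 * p * u ≤ 1) : (1 - u) ^ (-ν) ≤ 1 + 2 * p * u := by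
  have hu1 : 0 < 1 - u := by nlinarith
  have hpu0 : 0 ≤ p * u := mul_nonneg (zero_le_one.trans hp) hu
  have hlow : 1 - p * u ≤ (1 - u) ^ ν := calc
    1 - p * u = 1 + p * -u := by ring
    _ ≤ (1 + -u) ^ p := one_add_mul_self_le_rpow_one_add (by linarith) hp
    _ = (1 - u) ^ p := by ring_nf
    _ ≤ (1 - u) ^ ν := rpow_le_rpow_of_exponent_ge hu1 (by linarith) hνp
  rw [rpow_neg hu1.le, inv_le_iff_one_le_mul₀ (rpow_pos_of_pos hu1 ν)]
  calc 1 ≤ (1 + 2 * p * u) * (1 - p * u) := by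
        nlinarith [mul_nonneg hpu0 (sub_nonneg.2 hpu)]
    _ ≤ (1 + 2 * p * u) * (1 - u) ^ ν := by gcongr

lemma sub_rpow_neg_le {ν p t x s : ℝ} (hν : 0 ≤ ν) (hνp : ν ≤ p) (hp : 1 ≤ p) (ht : 0 < t)
    (hs : 0 ≤ s) (hsx : s ≤ x) (hpx : 2 * p * x ≤ t) :
    (t - s) ^ (-ν) ≤ t ^ (-ν) * (1 + 2 * p * (x / t)) := calc
  (t - s) ^ (-ν) ≤ (t - x) ^ (-ν) :=
    rpow_le_rpow_of_nonpos (by nlinarith) (by linarith) (by linarith)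
  _ = t ^ (-ν) * (1 - x / t) ^ (-ν) := by
    rw [← mul_rpow ht.le, mul_one_sub, mul_div_cancel₀ _ ht.ne']
    · rw [sub_nonneg, div_le_one ht]; nlinarith
  _ ≤ t ^ (-ν) * (1 + 2 * p * (x / t)) := by
    have hpx' : 2 * p * (x / t) ≤ 1 := by rwa [← mul_div_assoc, div_le_one ht]
    gcongr
    exact one_sub_rpow_neg_le hνp hp (div_nonneg (hs.trans hsx) ht.le) hpx'

lemma measureReal_univ_le_Icc_add_Ioi {μ : Measure ℝ} [IsFiniteMeasure μ] {a x : ℝ}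
    (hμ : μ (Iio a) = 0) (hax : a ≤ x) :
    μ.real univ ≤ μ.real (Icc a x) + μ.real (Ioi x) := calc
  μ.real univ ≤ μ.real (Iio a) + μ.real (Icc a x ∪ Ioi x) := by
    rw [Icc_union_Ioi_eq_Ici hax, ← Iio_union_Ici]
    exact measureReal_union_le _ _
  _ ≤ μ.real (Icc a x) + μ.real (Ioi x) := by
    rw [measureReal_def, hμ, ENNReal.toReal_zero, zero_add]
    exact measureReal_union_le _ _

lemma abs_setIntegral_sub_mul_le {X : Type*} [MeasurableSpace X] {μ : Measure X}
    [IsFiniteMeasure μ] {s : Set X} {f : X → ℝ} {a ε δ : ℝ} (hs : MeasurableSet s)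
    (hf : AEStronglyMeasurable f μ) (ha : 0 ≤ a) (hε : 0 ≤ ε)
    (hlo : ∀ x ∈ s, a ≤ f x) (hhi : ∀ x ∈ s, f x ≤ a * (1 + ε))
    (hmass : μ.real univ - δ ≤ μ.real s) :
    |∫ x in s, f x ∂μ - μ.real univ * a| ≤ a * (μ.real univ * ε + δ) := by
  have hnorm : ∀ x ∈ s, ‖f x‖ ≤ a * (1 + ε) := fun x hx ↦ by
    rw [norm_of_nonneg (ha.trans (hlo x hx))]; exact hhi x hx
  have hint : IntegrableOn f s μ := Measure.integrableOn_of_bounded (measure_ne_top μ s) hf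
    ((ae_restrict_iff' hs).2 (ae_of_all _ hnorm))
  have hI_lo : a * μ.real s ≤ ∫ x in s, f x ∂μ :=
    setIntegral_ge_of_const_le_real hs (measure_ne_top μ s) hlo hint
  have hI_hi : ∫ x in s, f x ∂μ ≤ a * (1 + ε) * μ.real s :=
    (le_abs_self _).trans (norm_setIntegral_le_of_norm_le_const (measure_lt_top μ s) hnorm)
  have hs_le : μ.real s ≤ μ.real univ := measureReal_mono (subset_univ s)
  rw [abs_sub_le_iff]
  have hs0 : 0 ≤ μ.real s := measureReal_nonneg
  constructor <;> nlinarith [mul_le_mul_of_nonneg_left hs_le (mul_nonneg ha hε),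
    mul_nonneg ha hε, mul_nonneg ha hs0, mul_nonneg (mul_nonneg ha hε) hs0]

lemma abs_setIntegral_Icc_rpow_neg_sub_le {μ : Measure ℝ} [IsFiniteMeasure μ]
    {ν p α C t : ℝ}
    (hν : 0 ≤ ν) (hνp : ν ≤ p) (hp : 1 ≤ p) (hsupp : μ (Iio 0) = 0)
    (htail : ∀ s ≥ (1 : ℝ), μ.real (Ioi s) ≤ C * s ^ (-ν)) (hα : 0 ≤ α) (ht : 1 ≤ t)
    (hpt : 2 * p ≤ t ^ (1 - α)) :
    |∫ s in Icc 0 (t ^ α), (t - s) ^ (-ν) ∂μ - μ.real univ * t ^ (-ν)| ≤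
      (2 * p * μ.real univ + C) * t ^ (-ν) * (t ^ (-α * ν) + t ^ (-(1 - α))) := by
  have ht0 : 0 < t := one_pos.trans_le ht
  have hx1 : 1 ≤ t ^ α := one_le_rpow ht hα
  have hC : 0 ≤ C := by simpa using measureReal_nonneg.trans (htail 1 le_rfl)
  have hxu : t ^ α / t = t ^ (-(1 - α)) := by rw [← rpow_sub_one ht0.ne', neg_sub]
  have hpx : 2 * p * t ^ α ≤ t := calc
    2 * p * t ^ α ≤ t ^ (1 - α) * t ^ α := by gcongr
    _ = t := by rw [← rpow_add ht0, sub_add_cancel, rpow_one]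
  have hmass : μ.real univ - C * t ^ (-α * ν) ≤ μ.real (Icc 0 (t ^ α)) := by
    have htail_x := htail (t ^ α) hx1
    rw [← rpow_mul ht0.le, mul_neg, ← neg_mul] at htail_x
    linarith [measureReal_univ_le_Icc_add_Ioi hsupp (zero_le_one.trans hx1)]
  refine (abs_setIntegral_sub_mul_le measurableSet_Icc
    (by fun_prop : Measurable fun s : ℝ ↦ (t - s) ^ (-ν)).aestronglyMeasurable
    (rpow_nonneg ht0.le _) (by positivity)
    (fun s hs ↦ rpow_le_rpow_of_nonpos (by nlinarith [hs.2]) (by linarith [hs.1]) (by linarith))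
    (fun s hs ↦ hxu ▸ sub_rpow_neg_le hν hνp hp ht0 hs.1 hs.2 hpx) hmass).trans ?_
  have hpm : 0 ≤ 2 * p * μ.real univ := by positivity
  have hu : 0 ≤ t ^ (-(1 - α)) := by positivity
  have hw : 0 ≤ t ^ (-α * ν) := by positivity
  have hsum : μ.real univ * (2 * p * t ^ (-(1 - α))) + C * t ^ (-α * ν) ≤
      (2 * p * μ.real univ + C) * (t ^ (-α * ν) + t ^ (-(1 - α))) := by
    nlinarith [mul_nonneg hpm hw, mul_nonneg hC hu]
  calc _ ≤ t ^ (-ν) * ((2 * p * μ.real univ + C) * (t ^ (-α * ν) + t ^ (-(1 - α)))) := by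
        gcongr
    _ = _ := by ring

/-- The two-sided estimate of the term `J₂`: for a finite measure `μ` on
`[0,∞)` with total mass `m` and polynomial tail bound,
`J₂(t) = (2^ν Γ(ν+1))⁻¹ ∫_{[0,t^α]} (t-s)^{-ν} dμ(s)` equals
`m/(Γ(ν+1)(2t)^ν)` up to an error `O(t^{-ν}(t^{-αν} + t^{-(1-α)}))`. -/
theorem J2_estimate (ν : ℝ) (μ : Measure ℝ) [IsFiniteMeasure μ]
    (C α : ℝ) (hν : 0 < ν) (hsupp : μ (Set.Iio 0) = 0)
    (htail : ∀ s ≥ (1 : ℝ), (μ (Set.Ioi s)).toReal ≤ C * s ^ (-ν))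
    (hα : α ∈ Set.Ioo (0 : ℝ) 1) :
    ∃ C'' T, ∀ t ≥ T,
      |(2 ^ ν * Real.Gamma (ν + 1))⁻¹ *
          ∫ s in Set.Icc 0 (t ^ α), (t - s) ^ (-ν) ∂μ -
        (μ Set.univ).toReal / (Real.Gamma (ν + 1) * (2 * t) ^ ν)| ≤
      C'' * t ^ (-ν) * (t ^ (-α * ν) + t ^ (-(1 - α))) := by
  obtain ⟨hα0, hα1⟩ := hα
  set p := max ν 1
  set G := 2 ^ ν * Gamma (ν + 1)
  obtain ⟨T, hT⟩ := eventually_atTop.1 <| (eventually_ge_atTop 1).and <|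
    (tendsto_rpow_atTop (sub_pos.2 hα1)).eventually_ge_atTop (2 * p)
  refine ⟨G⁻¹ * (2 * p * μ.real univ + C), T, fun t ht ↦ ?_⟩
  obtain ⟨ht1, hpt⟩ := hT t ht
  have hmass_const : μ.real univ / (Gamma (ν + 1) * (2 * t) ^ ν) =
      G⁻¹ * (μ.real univ * t ^ (-ν)) := by
    rw [mul_rpow zero_le_two (zero_le_one.trans ht1), rpow_neg (zero_le_one.trans ht1)]
    simp only [G]
    field_simp
  rw [← measureReal_def, hmass_const, ← mul_sub, abs_mul, abs_of_pos (by positivity)]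
  refine (mul_le_mul_of_nonneg_left (abs_setIntegral_Icc_rpow_neg_sub_le hν.le (le_max_left ν 1)
    (le_max_right ν 1) hsupp htail hα0.le ht1 hpt) (by positivity)).trans_eq ?_
  ring
end
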